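/- Multivariate Chebyshev inequality (Chen 2007): Let Ω be a probability space and X : Ω → (Fin N → ℝ) a measurable random vector whose components are square-integrable, with componentwise mean μ and invertible covariance matrix Σ. Then for every real ε > 0, the probability that (X − μ)ᵀ Σ⁻¹ (X − μ) ≥ ε is at most N/ε, i.e. ℙ{ω : (X ω − μ) ⬝ᵥ (Σ⁻¹ *ᵥ (X ω − μ)) ≥ ε} ≤ N/ε. -/

import Mathlib

open MeasureTheory Matrix

/-- Multivariate Chebyshev inequality (Chen 2007):
`ℙ{ω : (X ω − μ) ⬝ᵥ (Σ⁻¹ *ᵥ (X ω − μ)) ≥ ε} ≤ N / ε`. -/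
theorem multivariate_chebyshev
    {Ω : Type*} [MeasurableSpace Ω] (P : Measure Ω) [IsProbabilityMeasure P]
    (N : ℕ) (X : Ω → Fin N → ℝ) (hX : Measurable X)
    (hL2 : ∀ i, MemLp (fun ω => X ω i) 2 P)
    (μ : Fin N → ℝ) (hμ : ∀ i, μ i = ∫ ω, X ω i ∂P)
    (C : Matrix (Fin N) (Fin N) ℝ)
    (hC : ∀ i j, C i j = ∫ ω, (X ω i - μ i) * (X ω j - μ j) ∂P)
    (hCinv : IsUnit C)
    (ε : ℝ) (hε : 0 < ε) :
    P {ω | (X ω - μ) ⬝ᵥ (C⁻¹ *ᵥ (X ω - μ)) ≥ ε} ≤ ENNReal.ofReal ((N : ℝ) / ε) := by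
  classical
  set f : Fin N → Ω → ℝ := fun i ω => X ω i - μ i with hfdef
  have hfL2 : ∀ i, MemLp (f i) 2 P := fun i => (hL2 i).sub (memLp_const (μ i))
  have hint : ∀ i j, Integrable (fun ω => f i ω * f j ω) P := by
    intro i j
    have h : MemLp (fun ω => f i ω * f j ω) 1 P := (hfL2 j).smul (hfL2 i)
    simpa [smul_eq_mul] using memLp_one_iff_integrable.mp h
  have hCsymm : ∀ i j, C j i = C i j := by
    intro i j
    rw [hC, hC]
    congr 1; ext ω; ring
  -- quadratic form of C as integral of a square
  have hquad : ∀ x : Fin N → ℝ, x ⬝ᵥ (C *ᵥ x) = ∫ ω, (∑ i, x i * f i ω) ^ 2 ∂P := by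
    intro x
    have hpt : ∀ ω, (∑ i, x i * f i ω) ^ 2
        = ∑ i, ∑ j, (x i * x j) * (f i ω * f j ω) := by
      intro ω
      rw [sq, Finset.sum_mul_sum]
      refine Finset.sum_congr rfl fun i _ => Finset.sum_congr rfl fun j _ => by ring
    calc x ⬝ᵥ (C *ᵥ x)
        = ∑ i, ∑ j, (x i * x j) * ∫ ω, f i ω * f j ω ∂P := by
          simp only [dotProduct, mulVec, hC]
          refine Finset.sum_congr rfl fun i _ => ?_
          rw [Finset.mul_sum]
          exact Finset.sum_congr rfl fun j _ => by ring
      _ = ∑ i, ∑ j, ∫ ω, (x i * x j) * (f i ω * f j ω) ∂P := by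
          refine Finset.sum_congr rfl fun i _ => Finset.sum_congr rfl fun j _ => ?_
          rw [integral_const_mul]
      _ = ∫ ω, ∑ i, ∑ j, (x i * x j) * (f i ω * f j ω) ∂P := by
          rw [integral_finset_sum _ fun i _ => integrable_finset_sum _
            fun j _ => (hint i j).const_mul _]
          exact Finset.sum_congr rfl fun i _ =>
            (integral_finset_sum _ fun j _ => (hint i j).const_mul _).symm
      _ = ∫ ω, (∑ i, x i * f i ω) ^ 2 ∂P := by
          exact integral_congr_ae (Filter.Eventually.of_forall fun ω => (hpt ω).symm)
  have hPSD : C.PosSemidef := by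
    refine posSemidef_iff_dotProduct_mulVec.mpr ⟨?_, ?_⟩
    · ext i j
      simp [conjTranspose_apply, hCsymm i j]
    · intro x
      simp only [star_trivial]
      rw [hquad]
      exact integral_nonneg fun ω => sq_nonneg _
  have hPD : C.PosDef := by
    refine posDef_iff_dotProduct_mulVec.mpr ⟨hPSD.1, fun x hx => lt_of_le_of_ne (by simpa using hPSD.dotProduct_mulVec_nonneg x) fun h => hx ?_⟩
    have h0 : C *ᵥ x = 0 := (hPSD.dotProduct_mulVec_zero_iff x).mp (by simpa using h.symm)
    have hinj := (Matrix.mulVec_injective_iff_isUnit).mpr hCinv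
    exact hinj (by simpa using h0)
  have hPDinv : C⁻¹.PosDef := hPD.inv
  -- The quadratic form Q
  set Q : Ω → ℝ := fun ω => (X ω - μ) ⬝ᵥ (C⁻¹ *ᵥ (X ω - μ)) with hQdef
  have hQeq : ∀ ω, Q ω = ∑ i, ∑ j, C⁻¹ i j * (f i ω * f j ω) := by
    intro ω
    simp only [hQdef, dotProduct, mulVec, Pi.sub_apply]
    refine Finset.sum_congr rfl fun i _ => ?_
    rw [Finset.mul_sum]
    exact Finset.sum_congr rfl fun j _ => by simp [hfdef]; ring
  have hQnonneg : ∀ ω, 0 ≤ Q ω := by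
    intro ω
    have := hPDinv.posSemidef.dotProduct_mulVec_nonneg (X ω - μ)
    simpa [hQdef] using this
  have hQint : Integrable Q P := by
    rw [show Q = fun ω => ∑ i, ∑ j, C⁻¹ i j * (f i ω * f j ω) from funext hQeq]
    exact integrable_finset_sum _ fun i _ => integrable_finset_sum _
      fun j _ => (hint i j).const_mul _
  have hQint_val : ∫ ω, Q ω ∂P = (N : ℝ) := by
    calc ∫ ω, Q ω ∂P
        = ∫ ω, ∑ i, ∑ j, C⁻¹ i j * (f i ω * f j ω) ∂P :=
          integral_congr_ae (Filter.Eventually.of_forall hQeq)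
      _ = ∑ i, ∑ j, C⁻¹ i j * ∫ ω, f i ω * f j ω ∂P := by
          rw [integral_finset_sum _ fun i _ => integrable_finset_sum _
            fun j _ => (hint i j).const_mul (C⁻¹ i j)]
          exact Finset.sum_congr rfl fun i _ => by
            rw [integral_finset_sum _ fun j _ => (hint i j).const_mul (C⁻¹ i j)]
            exact Finset.sum_congr rfl fun j _ => (integral_const_mul _ _)
      _ = ∑ i, ∑ j, C⁻¹ i j * C j i := by
          refine Finset.sum_congr rfl fun i _ => Finset.sum_congr rfl fun j _ => ?_
          congr 1
          rw [hC]
          refine integral_congr_ae (Filter.Eventually.of_forall fun ω => ?_)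
          simp only [hfdef]
          ring
      _ = (C⁻¹ * C).trace := by
          simp [Matrix.trace, Matrix.diag, Matrix.mul_apply]
      _ = (N : ℝ) := by
          rw [Matrix.nonsing_inv_mul C ((Matrix.isUnit_iff_isUnit_det C).mp hCinv)]
          simp [Matrix.trace_one]
  -- Markov's inequality
  have hset : {ω | (X ω - μ) ⬝ᵥ (C⁻¹ *ᵥ (X ω - μ)) ≥ ε} = {ω | ε ≤ Q ω} := rfl
  rw [hset]
  have hmarkov := mul_meas_ge_le_integral_of_nonneg
    (Filter.Eventually.of_forall hQnonneg) hQint ε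
  rw [hQint_val] at hmarkov
  have htoReal : (P {ω | ε ≤ Q ω}).toReal ≤ (N : ℝ) / ε := by
    rw [le_div_iff₀ hε]
    rw [← measureReal_def]
    linarith [hmarkov]
  calc P {ω | ε ≤ Q ω} = ENNReal.ofReal (P {ω | ε ≤ Q ω}).toReal :=
        (ENNReal.ofReal_toReal (measure_ne_top P _)).symm
    _ ≤ ENNReal.ofReal ((N : ℝ) / ε) := ENNReal.ofReal_le_ofReal htoReal
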